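/- Assume λ_{k_c+1} > 0 and λ_{k_r+1} > 0, let γ > 0, and set γ̄_c = γ/λ_{k_c+1}, γ̄_r = γ/λ_{k_r+1}. Let X̄ ∈ LR(P_{k_r}, Q_{k_c}), Ẽ ∈ ℝ^{ρ_r×ρ_c}, X̃ = M_r X̄ M_c + Ẽ, and let X* be a minimizer over X ∈ ℝ^{p×n} of ‖M_r X M_c − X̃‖_F² + γ̄_c tr(X L_c X^⊤) + γ̄_r tr(X^⊤ L_r X). Then ‖M_r X* M_c − X̃‖_F ≤ ‖Ẽ‖_F + √(γ (λ_{k_c}/λ_{k_c+1} + λ_{k_r}/λ_{k_r+1})) ‖X̄‖_F. -/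

import Mathlib

open Matrix

/-- Frobenius norm of a real matrix. -/
noncomputable def frobNorm {m n : Type*} [Fintype m] [Fintype n] (A : Matrix m n ℝ) : ℝ :=
  Real.sqrt (∑ i, ∑ j, (A i j) ^ 2)

/-- Euclidean norm of a real vector. -/
noncomputable def vecNorm {n : Type*} [Fintype n] (x : n → ℝ) : ℝ :=
  Real.sqrt (∑ i, (x i) ^ 2)

/-- A row-selection matrix: its rows are distinct standard basis vectors of `ℝ^p`. -/
def IsRowSelection {ρ p : ℕ} (M : Matrix (Fin ρ) (Fin p) ℝ) : Prop :=
  ∃ f : Fin ρ → Fin p, Function.Injective f ∧ ∀ i j, M i j = if j = f i then 1 else 0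

/-- A column-selection matrix: its columns are distinct standard basis vectors of `ℝ^n`. -/
def IsColSelection {n ρ : ℕ} (M : Matrix (Fin n) (Fin ρ) ℝ) : Prop :=
  ∃ f : Fin ρ → Fin n, Function.Injective f ∧ ∀ i j, M i j = if i = f j then 1 else 0

/-- `y` lies in the span of the columns of `P`. -/
def inColSpan {p k : ℕ} (P : Matrix (Fin p) (Fin k) ℝ) (y : Fin p → ℝ) : Prop :=
  ∃ c : Fin k → ℝ, y = P.mulVec c

/-- `Y ∈ LR(P, Q)`: every column of `Y` lies in the column span of `P` and every row of `Y`
lies in the column span of `Q`. -/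
def memLR {p n kr kc : ℕ} (P : Matrix (Fin p) (Fin kr) ℝ) (Q : Matrix (Fin n) (Fin kc) ℝ)
    (Y : Matrix (Fin p) (Fin n) ℝ) : Prop :=
  (∀ j, inColSpan P (fun i => Y i j)) ∧ (∀ i, inColSpan Q (fun j => Y i j))

/-- Graph cumulative coherence `ν = max_i √n ‖Q^⊤ e_i‖₂`. -/
noncomputable def coherence {n k : ℕ} (Q : Matrix (Fin n) (Fin k) ℝ) : ℝ :=
  ⨆ i : Fin n, Real.sqrt n * vecNorm (fun j => Q i j)

/-!
Compare the objective at `X*` with its value at `X̄`. There the data term is `‖Ẽ‖²`, and since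
the rows of `X̄` lie in the span of the eigenvectors of `L_c` with eigenvalues `≤ λ_{k_c}`, a
Rayleigh-quotient bound gives `tr(X̄ L_c X̄ᵀ) ≤ λ_{k_c} ‖X̄‖²` (likewise for the columns and `L_r`).
The regularizers at `X*` are nonnegative because `L_c`, `L_r` are positive semidefinite, so the
squared residual is at most `‖Ẽ‖² + γ (λ_{k_c}/λ_{k_c+1} + λ_{k_r}/λ_{k_r+1}) ‖X̄‖²`, and
`√(a² + b²) ≤ a + b` finishes.
-/

lemma frobNorm_nonneg {m n : Type*} [Fintype m] [Fintype n] (A : Matrix m n ℝ) :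
    0 ≤ frobNorm A :=
  Real.sqrt_nonneg _

lemma frobNorm_sq {m n : Type*} [Fintype m] [Fintype n] (A : Matrix m n ℝ) :
    frobNorm A ^ 2 = ∑ i, A i ⬝ᵥ A i := by
  rw [frobNorm, Real.sq_sqrt (by positivity)]
  simp only [dotProduct, sq]

lemma frobNorm_neg {m n : Type*} [Fintype m] [Fintype n] (A : Matrix m n ℝ) :
    frobNorm (-A) = frobNorm A := by
  simp [frobNorm]

lemma frobNorm_transpose {m n : Type*} [Fintype m] [Fintype n] (A : Matrix m n ℝ) :
    frobNorm Aᵀ = frobNorm A := by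
  rw [frobNorm, frobNorm, Finset.sum_comm]
  rfl

lemma trace_mul_mul_transpose {m n R : Type*} [Fintype m] [Fintype n] [CommSemiring R]
    (X : Matrix m n R) (L : Matrix n n R) :
    trace (X * L * Xᵀ) = ∑ i, X i ⬝ᵥ L *ᵥ X i := by
  simp only [trace, diag, mul_apply, transpose_apply, dotProduct, mulVec, Finset.sum_mul,
    Finset.mul_sum]
  refine Finset.sum_congr rfl fun i _ => Finset.sum_comm.trans ?_
  exact Finset.sum_congr rfl fun a _ => Finset.sum_congr rfl fun b _ => by ring

lemma mulVec_dotProduct_mulVec_mulVec {m k R : Type*} [Fintype m] [Fintype k] [CommSemiring R]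
    (A : Matrix m k R) (L : Matrix m m R) (v : k → R) :
    (A *ᵥ v) ⬝ᵥ L *ᵥ (A *ᵥ v) = v ⬝ᵥ (Aᵀ * L * A) *ᵥ v := by
  rw [mulVec_mulVec, dotProduct_mulVec, ← vecMul_transpose, vecMul_vecMul, dotProduct_mulVec,
    Matrix.mul_assoc]

lemma dotProduct_diagonal_mulVec {k R : Type*} [Fintype k] [DecidableEq k] [CommSemiring R]
    (d v : k → R) :
    v ⬝ᵥ diagonal d *ᵥ v = ∑ j, d j * v j ^ 2 := by
  simp only [dotProduct, mulVec_diagonal]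
  exact Finset.sum_congr rfl fun j _ => by ring

section Eigenbasis

variable {n k : Type*} [Fintype n] [DecidableEq n] [DecidableEq k]
  {L Q : Matrix n n ℝ} {ev : n → ℝ}

lemma submatrix_transpose_mul_mul_submatrix (hQ : Qᵀ * Q = 1) (hLQ : L * Q = Q * diagonal ev)
    {g : k → n} (hg : Function.Injective g) :
    (Q.submatrix id g)ᵀ * L * Q.submatrix id g = diagonal (ev ∘ g) := by
  have hdiag : Qᵀ * L * Q = diagonal ev := by
    rw [Matrix.mul_assoc, hLQ, ← Matrix.mul_assoc, hQ, Matrix.one_mul]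
  calc (Q.submatrix id g)ᵀ * L * Q.submatrix id g = (Qᵀ * L * Q).submatrix g g := by
        rw [submatrix_mul _ _ _ id _ Function.bijective_id,
          submatrix_mul _ _ _ id _ Function.bijective_id, submatrix_id_id, transpose_submatrix]
    _ = diagonal (ev ∘ g) := by rw [hdiag, submatrix_diagonal _ _ hg]

lemma dotProduct_mulVec_le_of_eigenvalue_le [Fintype k] (hQ : Qᵀ * Q = 1)
    (hLQ : L * Q = Q * diagonal ev)
    {g : k → n} (hg : Function.Injective g) {lam : ℝ} (hlam : ∀ j, ev (g j) ≤ lam)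
    (v : k → ℝ) :
    (Q.submatrix id g *ᵥ v) ⬝ᵥ L *ᵥ (Q.submatrix id g *ᵥ v) ≤
      lam * ((Q.submatrix id g *ᵥ v) ⬝ᵥ (Q.submatrix id g *ᵥ v)) := by
  set x := Q.submatrix id g *ᵥ v
  have hunit : (Q.submatrix id g)ᵀ * (1 : Matrix n n ℝ) * Q.submatrix id g = 1 := by
    simpa using submatrix_transpose_mul_mul_submatrix (L := 1) (ev := 1) hQ (by simp) hg
  have hnorm : x ⬝ᵥ x = ∑ j, v j ^ 2 := by
    have := mulVec_dotProduct_mulVec_mulVec (Q.submatrix id g) 1 v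
    rw [one_mulVec, hunit, ← diagonal_one, dotProduct_diagonal_mulVec] at this
    simpa using this
  rw [hnorm, mulVec_dotProduct_mulVec_mulVec, submatrix_transpose_mul_mul_submatrix hQ hLQ hg,
    dotProduct_diagonal_mulVec, Finset.mul_sum]
  exact Finset.sum_le_sum fun j _ => by
    simpa using mul_le_mul_of_nonneg_right (hlam j) (sq_nonneg (v j))

end Eigenbasis

lemma trace_mul_mul_transpose_le_of_inColSpan {m : Type*} [Fintype m] {N K : ℕ}
    {L Q : Matrix (Fin N) (Fin N) ℝ} {ev : Fin N → ℝ} (hQ : Qᵀ * Q = 1)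
    (hLQ : L * Q = Q * diagonal ev) {g : Fin K → Fin N} (hg : Function.Injective g) {lam : ℝ}
    (hlam : ∀ j, ev (g j) ≤ lam) {X : Matrix m (Fin N) ℝ}
    (hX : ∀ i, inColSpan (Q.submatrix id g) (X i)) :
    trace (X * L * Xᵀ) ≤ lam * frobNorm X ^ 2 := by
  rw [trace_mul_mul_transpose, frobNorm_sq, Finset.mul_sum]
  refine Finset.sum_le_sum fun i _ => ?_
  obtain ⟨c, hc⟩ := hX i
  rw [hc]
  exact dotProduct_mulVec_le_of_eigenvalue_le hQ hLQ hg hlam c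

lemma Monotone.apply_castLE_le_apply_pred {α : Type*} [Preorder α] {N k : ℕ} {f : Fin N → α}
    (hf : Monotone f) (hk : k ≤ N) (h : k - 1 < N) (j : Fin k) :
    f (Fin.castLE hk j) ≤ f ⟨k - 1, h⟩ :=
  hf (by simp only [Fin.le_def, Fin.val_castLE]; omega)

/-- For `C < 0`, `√C = 0` and the hypothesis already forces `R ≤ E`. -/
lemma le_add_sqrt_mul_of_sq_le {R E F C : ℝ} (hE : 0 ≤ E) (hF : 0 ≤ F)
    (h : R ^ 2 ≤ E ^ 2 + C * F ^ 2) : R ≤ E + √C * F := by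
  have hC : C ≤ √C ^ 2 := Real.sq_sqrt' ▸ le_max_left C 0
  have hsq : R ^ 2 ≤ (E + √C * F) ^ 2 := by
    nlinarith [mul_nonneg (mul_nonneg hE (Real.sqrt_nonneg C)) hF, sq_nonneg F]
  nlinarith [mul_nonneg (Real.sqrt_nonneg C) hF]

/-- residual bound for the alternate decoder:
`‖M_r X* M_c − X̃‖_F ≤ ‖Ẽ‖_F + √(γ(λ_{k_c}/λ_{k_c+1} + λ_{k_r}/λ_{k_r+1})) ‖X̄‖_F`.
The 1-indexed eigenvalues `λ_{k_c}`, `λ_{k_c+1}` are `evc ⟨k_c−1⟩`, `evc ⟨k_c⟩`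
(similarly for `r`). -/
theorem alternate_decoder_residual_bound
    (p n ρr ρc kr kc : ℕ) (hkr0 : 0 < kr) (hkr : kr < p) (hkc0 : 0 < kc) (hkc : kc < n)
    (Lr : Matrix (Fin p) (Fin p) ℝ) (Lc : Matrix (Fin n) (Fin n) ℝ)
    (hLr : Lr.PosSemidef) (hLc : Lc.PosSemidef)
    (evr : Fin p → ℝ) (evc : Fin n → ℝ) (hevr : Monotone evr) (hevc : Monotone evc)
    (P : Matrix (Fin p) (Fin p) ℝ) (Q : Matrix (Fin n) (Fin n) ℝ)
    (hPorth : Pᵀ * P = 1) (hQorth : Qᵀ * Q = 1)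
    (hLrP : Lr * P = P * Matrix.diagonal evr)
    (hLcQ : Lc * Q = Q * Matrix.diagonal evc)
    (Pkr : Matrix (Fin p) (Fin kr) ℝ) (hPkr : Pkr = P.submatrix id (Fin.castLE hkr.le))
    (Qkc : Matrix (Fin n) (Fin kc) ℝ) (hQkc : Qkc = Q.submatrix id (Fin.castLE hkc.le))
    (Mr : Matrix (Fin ρr) (Fin p) ℝ)
    (Mc : Matrix (Fin n) (Fin ρc) ℝ)
    (hlamc1 : 0 < evc ⟨kc, hkc⟩) (hlamr1 : 0 < evr ⟨kr, hkr⟩)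
    (γ γc γr : ℝ) (hγ : 0 < γ)
    (hγc : γc = γ / evc ⟨kc, hkc⟩) (hγr : γr = γ / evr ⟨kr, hkr⟩)
    (Xbar : Matrix (Fin p) (Fin n) ℝ) (hXbar : memLR Pkr Qkc Xbar)
    (Etil : Matrix (Fin ρr) (Fin ρc) ℝ)
    (Xtil : Matrix (Fin ρr) (Fin ρc) ℝ) (hXtil : Xtil = Mr * Xbar * Mc + Etil)
    (Xstar : Matrix (Fin p) (Fin n) ℝ)
    (hmin : ∀ X : Matrix (Fin p) (Fin n) ℝ,
      (frobNorm (Mr * Xstar * Mc - Xtil)) ^ 2 + γc * Matrix.trace (Xstar * Lc * Xstarᵀ)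
        + γr * Matrix.trace (Xstarᵀ * Lr * Xstar) ≤
      (frobNorm (Mr * X * Mc - Xtil)) ^ 2 + γc * Matrix.trace (X * Lc * Xᵀ)
        + γr * Matrix.trace (Xᵀ * Lr * X)) :
    frobNorm (Mr * Xstar * Mc - Xtil) ≤
      frobNorm Etil +
        Real.sqrt (γ * (evc ⟨kc - 1, by omega⟩ / evc ⟨kc, hkc⟩
          + evr ⟨kr - 1, by omega⟩ / evr ⟨kr, hkr⟩)) * frobNorm Xbar := by
  subst hPkr hQkc hγc hγr
  obtain ⟨hcols, hrows⟩ := hXbar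
  have hc := trace_mul_mul_transpose_le_of_inColSpan hQorth hLcQ (Fin.castLE_injective _)
    (hevc.apply_castLE_le_apply_pred hkc.le (by omega)) (X := Xbar) hrows
  have hr := trace_mul_mul_transpose_le_of_inColSpan hPorth hLrP (Fin.castLE_injective _)
    (hevr.apply_castLE_le_apply_pred hkr.le (by omega)) (X := Xbarᵀ) hcols
  rw [transpose_transpose, frobNorm_transpose] at hr
  have hstar_c : 0 ≤ trace (Xstar * Lc * Xstarᵀ) := by
    simpa using (hLc.mul_mul_conjTranspose_same Xstar).trace_nonneg
  have hstar_r : 0 ≤ trace (Xstarᵀ * Lr * Xstar) := by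
    simpa using (hLr.conjTranspose_mul_mul_same Xstar).trace_nonneg
  have hres : Mr * Xbar * Mc - Xtil = -Etil := by rw [hXtil, sub_add_cancel_left]
  have hobj := hmin Xbar
  rw [hres, frobNorm_neg] at hobj
  refine le_add_sqrt_mul_of_sq_le (frobNorm_nonneg _) (frobNorm_nonneg _) ?_
  have hwc : 0 ≤ γ / evc ⟨kc, hkc⟩ := (div_pos hγ hlamc1).le
  have hwr : 0 ≤ γ / evr ⟨kr, hkr⟩ := (div_pos hγ hlamr1).le
  calc _ ≤ frobNorm Etil ^ 2 + γ / evc ⟨kc, hkc⟩ * (evc ⟨kc - 1, by omega⟩ * frobNorm Xbar ^ 2)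
        + γ / evr ⟨kr, hkr⟩ * (evr ⟨kr - 1, by omega⟩ * frobNorm Xbar ^ 2) := by
          linarith [mul_le_mul_of_nonneg_left hc hwc, mul_le_mul_of_nonneg_left hr hwr,
            mul_nonneg hwc hstar_c, mul_nonneg hwr hstar_r]
    _ = _ := by ring
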